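/- Let α, β, γ : ℝ² → ℝ be differentiable functions of (u,v). On U = {(u,v,r,θ) ∈ ℝ⁴ : r ≠ 0} define the null vierbein k : U → (4×4 real matrices) with rows k⁰ = (1, 0, 0, 0), k¹ = (α(u,v), β(u,v), 0, 0), k² = (0, 0, γ(u,v), 0), k³ = (0, 0, 0, γ(u,v)·r) (i.e., the coframe k¹ = du, k² = α du + β dv, k³ = γ dr, k⁴ = γ r dθ). Let X₁ = (0,0, −cos θ, sin θ/r), X₂ = (0,0, sin θ, cos θ/r), X₃ = (0,0,0,1); let the only nonzero f-components be f₁^3 = sin θ / r, f₂^3 = cos θ / r; and let λ₁, λ₂, λ₃ be the e(2)-representation matrices λ₁ with entries (1,3) = −1, (3,0) = −1; λ₂ with entries (1,2) = −1, (2,0) = −1; λ₃ with entries (2,3) = 1, (3,2) = −1 (all others zero). Then k is a symmetry frame for the E(2) symmetry group: for all I ∈ {1,2,3}, all a, μ ∈ {0,1,2,3} and all x ∈ U, Σ_ν X_I^ν(x) ∂_ν k^a_μ(x) + Σ_ν ∂_μ X_I^ν(x) k^a_ν(x) = Σ_î f_I^î(x) Σ_b (λ_î)^a_b k^b_μ(x).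 -/

import Mathlib

open Finset

/- Coordinates are `(u, v, r, θ) = (x 0, x 1, x 2, x 3)`. -/

/-- The μ-th partial derivative of a function on ℝ⁴. -/
noncomputable def pd (f : (Fin 4 → ℝ) → ℝ) (μ : Fin 4) (x : Fin 4 → ℝ) : ℝ :=
  fderiv ℝ f x (Pi.single μ 1)

/-- The E(2) symmetry vector fields X₁, X₂, X₃. -/
noncomputable def XE2 : Fin 3 → (Fin 4 → ℝ) → (Fin 4 → ℝ) :=
  ![fun x => ![0, 0, -Real.cos (x 3), Real.sin (x 3) / x 2],
    fun x => ![0, 0, Real.sin (x 3), Real.cos (x 3) / x 2],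
    fun _ => ![0, 0, 0, 1]]

/-- The functions `f I î`; the only nonzero components are
`f₁³ = sin θ / r` and `f₂³ = cos θ / r`. -/
noncomputable def fE2 : Fin 3 → Fin 3 → (Fin 4 → ℝ) → ℝ :=
  ![![fun _ => 0, fun _ => 0, fun x => Real.sin (x 3) / x 2],
    ![fun _ => 0, fun _ => 0, fun x => Real.cos (x 3) / x 2],
    ![fun _ => 0, fun _ => 0, fun _ => 0]]

/-- The e(2)-representation matrices λ₁, λ₂, λ₃. -/
def lamE2 : Fin 3 → Fin 4 → Fin 4 → ℝ :=
  ![![![0, 0, 0, 0], ![0, 0, 0, -1], ![0, 0, 0, 0], ![-1, 0, 0, 0]],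
    ![![0, 0, 0, 0], ![0, 0, -1, 0], ![-1, 0, 0, 0], ![0, 0, 0, 0]],
    ![![0, 0, 0, 0], ![0, 0, 0, 0], ![0, 0, 0, 1], ![0, 0, -1, 0]]]

/-- The null vierbein `k¹ = du`, `k² = α du + β dv`, `k³ = γ dr`, `k⁴ = γ r dθ`,
as a matrix field `k x a μ`. -/
noncomputable def kE2 (α β γ : ℝ × ℝ → ℝ) (x : Fin 4 → ℝ) : Fin 4 → Fin 4 → ℝ :=
  ![![1, 0, 0, 0],
    ![α (x 0, x 1), β (x 0, x 1), 0, 0],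
    ![0, 0, γ (x 0, x 1), 0],
    ![0, 0, 0, γ (x 0, x 1) * x 2]]

/-!
Each `X_I` has only `r`- and `θ`-components, and `k` depends on `(r, θ)` only through the
factor `r` in `k³_θ = γ r`. Hence the transport term `Σ_ν X^ν ∂_ν k^a_μ` is `X^r γ` at
`(a, μ) = (3, 3)` and vanishes otherwise, and what is left is, entry by entry, an identity
between `sin θ`, `cos θ` and `r ≠ 0`.
-/

open Real

section PartialDerivative

variable {f : (Fin 4 → ℝ) → ℝ} {x : Fin 4 → ℝ}

theorem HasFDerivAt.pd_eq {L : (Fin 4 → ℝ) →L[ℝ] ℝ} (h : HasFDerivAt f L x) (μ : Fin 4) :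
    pd f μ x = L (Pi.single μ 1) := by
  rw [pd, h.fderiv]

@[simp]
theorem pd_const (c : ℝ) (μ : Fin 4) : pd (fun _ => c) μ x = 0 := by
  simp [pd]

/-- Where `f` is not differentiable, `fderiv` is the junk value `0`, so no differentiability
is needed. -/
theorem pd_eq_zero_of_forall_add_smul_single {μ : Fin 4}
    (h : ∀ t : ℝ, f (x + t • Pi.single μ 1) = f x) : pd f μ x = 0 := by
  by_cases hf : DifferentiableAt ℝ f x
  · rw [pd, ← hf.lineDeriv_eq_fderiv, lineDeriv]
    simp [h]
  · simp [pd, fderiv_zero_of_not_differentiableAt hf]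

theorem hasFDerivAt_coord (i : Fin 4) (x : Fin 4 → ℝ) :
    HasFDerivAt (fun y : Fin 4 → ℝ => y i) (ContinuousLinearMap.proj i : (Fin 4 → ℝ) →L[ℝ] ℝ) x :=
  hasFDerivAt_apply i x

theorem hasFDerivAt_coord_inv {i : Fin 4} (hx : x i ≠ 0) :
    HasFDerivAt (fun y : Fin 4 → ℝ => (y i)⁻¹)
      ((ContinuousLinearMap.smulRight (1 : ℝ →L[ℝ] ℝ) (-(x i ^ 2)⁻¹)).comp
        (ContinuousLinearMap.proj i)) x :=
  (hasFDerivAt_inv hx).comp x (hasFDerivAt_coord i x)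

theorem pd_sin_coord (i μ : Fin 4) :
    pd (fun y => sin (y i)) μ x = cos (x i) * (Pi.single μ 1 : Fin 4 → ℝ) i := by
  rw [(hasFDerivAt_coord i x).sin.pd_eq]
  simp

theorem pd_neg_cos_coord (i μ : Fin 4) :
    pd (fun y => -cos (y i)) μ x = sin (x i) * (Pi.single μ 1 : Fin 4 → ℝ) i := by
  rw [HasFDerivAt.pd_eq (f := fun y => -cos (y i)) (hasFDerivAt_coord i x).cos.neg]
  simp

theorem pd_sin_div_coord {j : Fin 4} (hx : x j ≠ 0) (i μ : Fin 4) :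
    pd (fun y => sin (y i) / y j) μ x
      = cos (x i) / x j * (Pi.single μ 1 : Fin 4 → ℝ) i
        - sin (x i) / x j ^ 2 * (Pi.single μ 1 : Fin 4 → ℝ) j := by
  simp_rw [div_eq_mul_inv]
  rw [((hasFDerivAt_coord i x).sin.fun_mul (hasFDerivAt_coord_inv hx)).pd_eq]
  simp
  ring

theorem pd_cos_div_coord {j : Fin 4} (hx : x j ≠ 0) (i μ : Fin 4) :
    pd (fun y => cos (y i) / y j) μ x
      = -sin (x i) / x j * (Pi.single μ 1 : Fin 4 → ℝ) i
        - cos (x i) / x j ^ 2 * (Pi.single μ 1 : Fin 4 → ℝ) j := by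
  simp_rw [div_eq_mul_inv]
  rw [((hasFDerivAt_coord i x).cos.fun_mul (hasFDerivAt_coord_inv hx)).pd_eq]
  simp
  ring

end PartialDerivative

section E2Frame

variable (α β : ℝ × ℝ → ℝ) {γ : ℝ × ℝ → ℝ} (x : Fin 4 → ℝ)

theorem XE2_apply_zero (I : Fin 3) : XE2 I x 0 = 0 := by
  fin_cases I <;> rfl

theorem XE2_apply_one (I : Fin 3) : XE2 I x 1 = 0 := by
  fin_cases I <;> rfl

theorem pd_kE2_three (a μ : Fin 4) : pd (fun y => kE2 α β γ y a μ) 3 x = 0 :=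
  pd_eq_zero_of_forall_add_smul_single fun t => by simp [kE2]

theorem pd_kE2_two (hγ : DifferentiableAt ℝ γ (x 0, x 1)) (a μ : Fin 4) :
    pd (fun y => kE2 α β γ y a μ) 2 x = if a = 3 ∧ μ = 3 then γ (x 0, x 1) else 0 := by
  split_ifs with h
  · obtain ⟨rfl, rfl⟩ := h
    have h01 := (hasFDerivAt_coord 0 x).prodMk (hasFDerivAt_coord 1 x)
    change pd (fun y => γ (y 0, y 1) * y 2) 2 x = _
    rw [HasFDerivAt.pd_eq (f := fun y => γ (y 0, y 1) * y 2)
        ((hγ.hasFDerivAt.comp x h01).mul (hasFDerivAt_coord 2 x))]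
    simp [Prod.mk_zero_zero]
  · refine pd_eq_zero_of_forall_add_smul_single fun t => ?_
    fin_cases a <;> fin_cases μ <;> simp_all [kE2]

theorem sum_XE2_mul_pd_kE2 (hγ : DifferentiableAt ℝ γ (x 0, x 1)) (I : Fin 3) (a μ : Fin 4) :
    ∑ ν, XE2 I x ν * pd (fun y => kE2 α β γ y a μ) ν x
      = XE2 I x 2 * if a = 3 ∧ μ = 3 then γ (x 0, x 1) else 0 := by
  simp [Fin.sum_univ_four, XE2_apply_zero, XE2_apply_one, pd_kE2_two α β x hγ, pd_kE2_three]

end E2Frame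

theorem stmt_18_general (α β γ : ℝ × ℝ → ℝ)
    (hγ : Differentiable ℝ γ) :
    ∀ (I : Fin 3) (a μ : Fin 4) (x : Fin 4 → ℝ), x 2 ≠ 0 →
      (∑ ν, XE2 I x ν * pd (fun y => kE2 α β γ y a μ) ν x)
        + (∑ ν, pd (fun y => XE2 I y ν) μ x * kE2 α β γ x a ν)
      = ∑ i, fE2 I i x * ∑ b, lamE2 i a b * kE2 α β γ x b μ := by
  intro I a μ x hx
  rw [sum_XE2_mul_pd_kE2 α β x (hγ _)]
  fin_cases I <;> fin_cases a <;> fin_cases μ <;>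
    simp [XE2, fE2, lamE2, kE2, Fin.sum_univ_four, Fin.sum_univ_three, pd_sin_coord,
      pd_neg_cos_coord, pd_sin_div_coord hx, pd_cos_div_coord hx] <;>
    field_simp <;> ring

theorem stmt_18 (α β γ : ℝ × ℝ → ℝ)
    (hα : Differentiable ℝ α) (hβ : Differentiable ℝ β) (hγ : Differentiable ℝ γ) :
    ∀ (I : Fin 3) (a μ : Fin 4) (x : Fin 4 → ℝ), x 2 ≠ 0 →
      (∑ ν, XE2 I x ν * pd (fun y => kE2 α β γ y a μ) ν x)
        + (∑ ν, pd (fun y => XE2 I y ν) μ x * kE2 α β γ x a ν)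
      = ∑ i, fE2 I i x * ∑ b, lamE2 i a b * kE2 α β γ x b μ :=
  stmt_18_general α β γ hγ
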